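/- Let G = (V,E) be a finite simple undirected graph, W ⊆ V a vertex set, and k a positive integer. For a coloring c : V → {red, blue}, define Z_c = { v ∈ V ∖ W : there exists an important {v}–W separator of size at most k all of whose vertices are colored red by c }. Then for every vertex set Y ⊆ V disjoint from W that is k-shadow-removable with respect to W, there exist disjoint sets R, B ⊆ V with |R| ≤ k and |B| ≤ k² such that for every coloring c that colors every vertex of R red and every vertex of B blue, it holds that Y ∩ Z_c = ∅ and R_{G,W}(Y) ⊆ Z_c. -/

import Mathlib

open scoped Classical

variable {V : Type*} [Fintype V] [DecidableEq V]

/-- The graph `G − X`: the graph obtained from `G` by deleting the vertices of `X`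
(encoded on the same vertex type: vertices of `X` become isolated). -/
def removeVerts (G : SimpleGraph V) (X : Set V) : SimpleGraph V where
  Adj u v := G.Adj u v ∧ u ∉ X ∧ v ∉ X
  symm := ⟨by rintro u v ⟨h, hu, hv⟩; exact ⟨h.symm, hv, hu⟩⟩
  loopless := ⟨by rintro v ⟨h, -, -⟩; exact G.irrefl h⟩

/-- The open neighborhood `N(C)` of a vertex set `C`. -/
def nbhd (G : SimpleGraph V) (C : Set V) : Set V :=
  {v | v ∉ C ∧ ∃ u ∈ C, G.Adj u v}

/-- The set of vertices connected to `S` in `G − X`. -/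
def reachSet (G : SimpleGraph V) (X S : Set V) : Set V :=
  {v | ∃ s ∈ S, (removeVerts G X).Reachable s v}

/-- `X` is an `S`–`T` separator: `X ⊆ V ∖ (S ∪ T)` and no path of `G − X` connects `S` to `T`. -/
def IsSeparator (G : SimpleGraph V) (S T X : Set V) : Prop :=
  Disjoint X (S ∪ T) ∧ ∀ s ∈ S, ∀ t ∈ T, ¬ (removeVerts G X).Reachable s t

/-- A minimal `S`–`T` separator. -/
def IsMinimalSep (G : SimpleGraph V) (S T X : Set V) : Prop :=
  IsSeparator G S T X ∧ ∀ X' ⊂ X, ¬ IsSeparator G S T X'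

/-- A minimum `S`–`T` separator. -/
def IsMinimumSep (G : SimpleGraph V) (S T X : Set V) : Prop :=
  IsSeparator G S T X ∧ ∀ X', IsSeparator G S T X' → X.ncard ≤ X'.ncard

/-- A separator `X` is farthest (w.r.t. `S`) if every `S`–`T` separator whose reachable set
strictly contains that of `X` is strictly larger. -/
def IsFarthest (G : SimpleGraph V) (S T X : Set V) : Prop :=
  ∀ X', IsSeparator G S T X' → reachSet G X S ⊂ reachSet G X' S → X.ncard < X'.ncard

/-- An important `S`–`T` separator. -/
def IsImportantSep (G : SimpleGraph V) (S T X : Set V) : Prop :=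
  IsMinimalSep G S T X ∧ ∀ X', IsMinimalSep G S T X' →
    reachSet G X S ⊂ reachSet G X' S → X.ncard < X'.ncard

/-- The shadow `R_{G,W}(Y)`: the vertices of `G − Y` outside `W` that are not connected
to `W` in `G − Y`. -/
def shadow (G : SimpleGraph V) (W Y : Set V) : Set V :=
  {v | v ∉ W ∧ v ∉ Y ∧ ∀ w ∈ W, ¬ (removeVerts G Y).Reachable v w}

/-- `Y` is `k`-shadow-removable with respect to `W`. -/
def KShadowRemovable (G : SimpleGraph V) (W : Set V) (k : ℕ) (Y : Set V) : Prop :=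
  Y.ncard ≤ k ∧
  (∀ v ∈ shadow G W Y, ∃ X, IsImportantSep G {v} W X ∧ X.ncard ≤ k ∧ X ⊆ Y) ∧
  (∀ v ∈ Y, ∀ X, IsImportantSep G {v} W X → X.ncard ≤ k → ¬ X ⊆ Y)

/-- The set `Z_c` of vertices outside `W` having an important `{v}`–`W` separator of
size at most `k` that is entirely colored red (`true`) by `c`. -/
def Zset (G : SimpleGraph V) (W : Set V) (k : ℕ) (c : V → Bool) : Set V :=
  {v | v ∉ W ∧ ∃ X, IsImportantSep G {v} W X ∧ X.ncard ≤ k ∧ ∀ u ∈ X, c u = true}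

set_option linter.unusedSectionVars false
set_option maxHeartbeats 1000000

section Infra
variable {G : SimpleGraph V} {X X' S C W A : Set V} {s u z w v : V}

lemma removeVerts_mono (h : X' ⊆ X) : removeVerts G X ≤ removeVerts G X' := by
  rintro a b ⟨hab, ha, hb⟩; exact ⟨hab, fun h' => ha (h h'), fun h' => hb (h h')⟩

lemma mem_reachSet_self (hs : s ∈ S) : s ∈ reachSet G X S := ⟨s, hs, .refl _⟩

lemma subset_reachSet : S ⊆ reachSet G X S := fun _ h => mem_reachSet_self h

lemma reachSet_mono_source (h : S ⊆ C) : reachSet G X S ⊆ reachSet G X C := by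
  rintro z ⟨s, hs, hr⟩; exact ⟨s, h hs, hr⟩

lemma mem_reachSet_trans (hu : u ∈ reachSet G X S)
    (h : (removeVerts G X).Reachable u z) : z ∈ reachSet G X S := by
  obtain ⟨s, hs, hr⟩ := hu; exact ⟨s, hs, hr.trans h⟩

lemma removeVerts_adj_mk (hadj : G.Adj u z) (hu : u ∉ X) (hz : z ∉ X) :
    (removeVerts G X).Adj u z := ⟨hadj, hu, hz⟩

lemma mem_reachSet_adj (hu : u ∈ reachSet G X S) (hadj : G.Adj u z)
    (huX : u ∉ X) (hzX : z ∉ X) : z ∈ reachSet G X S :=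
  mem_reachSet_trans hu (SimpleGraph.Adj.reachable (removeVerts_adj_mk hadj huX hzX))

/-- Every vertex on a walk of `G − X` starting outside `X` avoids `X` and is reachable. -/
lemma walk_support_nin {s u : V} (p : (removeVerts G X).Walk s u) :
    s ∉ X → ∀ z ∈ p.support, z ∉ X ∧ z ∈ reachSet G X {s} := by
  induction p with
  | nil =>
      intro hs z hz
      rw [SimpleGraph.Walk.support_nil, List.mem_singleton] at hz
      subst hz; exact ⟨hs, mem_reachSet_self rfl⟩
  | @cons a b c h p ih =>
      intro hs z hz
      rw [SimpleGraph.Walk.support_cons, List.mem_cons] at hz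
      rcases hz with rfl | hz
      · exact ⟨hs, mem_reachSet_self rfl⟩
      · obtain ⟨hz1, hz2⟩ := ih h.2.2 z hz
        refine ⟨hz1, ?_⟩
        obtain ⟨t, ht, hr⟩ := hz2
        rw [Set.mem_singleton_iff] at ht; subst ht
        exact ⟨a, rfl, (SimpleGraph.Adj.reachable h).trans hr⟩

lemma reachSet_inter_X (hSX : ∀ t ∈ S, t ∉ X) : ∀ z ∈ reachSet G X S, z ∉ X := by
  rintro z ⟨s, hs, hr⟩
  obtain ⟨p⟩ := hr
  exact (walk_support_nin p (hSX s hs) z p.end_mem_support).1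

/-- Transfer a walk of `G − X` to `G − X'` provided its support avoids `X'`. -/
lemma reachable_transfer {s u : V} (p : (removeVerts G X).Walk s u) :
    (∀ z ∈ p.support, z ∉ X') → (removeVerts G X').Reachable s u := by
  induction p with
  | nil => intro _; exact .refl _
  | @cons a b c h p ih =>
      intro hp
      have ha : a ∉ X' := hp a (by simp [SimpleGraph.Walk.support_cons])
      have hb : b ∉ X' := hp b (by simp [SimpleGraph.Walk.support_cons])
      exact (SimpleGraph.Adj.reachable (removeVerts_adj_mk h.1 ha hb)).trans
        (ih fun z hz => hp z (by simp [SimpleGraph.Walk.support_cons, hz]))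

/-- Transfer reachability when the reach set w.r.t. `X` avoids `X'`. -/
lemma reach_transfer (hs : s ∉ X) (hr : (removeVerts G X).Reachable s u)
    (hX' : ∀ z ∈ reachSet G X {s}, z ∉ X') : (removeVerts G X').Reachable s u := by
  obtain ⟨p⟩ := hr
  exact reachable_transfer p fun z hz => hX' z (walk_support_nin p hs z hz).2

/-- Exit lemma: a walk from inside `A` to outside `A` uses an edge leaving `A`. -/
lemma exit_lemma {s w : V} (hr : (removeVerts G X).Reachable s w) :
    s ∈ A → w ∉ A → ∃ y z, y ∈ A ∧ z ∉ A ∧ (removeVerts G X).Adj y z := by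
  obtain ⟨p⟩ := hr
  induction p with
  | nil => intro hs hw; exact absurd hs hw
  | @cons a b c h p ih =>
      intro hs hw
      by_cases hb : b ∈ A
      · exact ih hb hw
      · exact ⟨a, b, hs, hb, h⟩

end Infra
section Infra2
variable {G : SimpleGraph V} {X X' S C W A B : Set V} {s u z w v : V}

lemma sep_disjoint_S (h : IsSeparator G S W X) : ∀ t ∈ S, t ∉ X :=
  fun t ht hX => (Set.disjoint_left.mp h.1 hX (Set.mem_union_left _ ht)).elim

lemma sep_disjoint_W (h : IsSeparator G S W X) : ∀ t ∈ W, t ∉ X :=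
  fun t ht hX => (Set.disjoint_left.mp h.1 hX (Set.mem_union_right _ ht)).elim

lemma sep_reach_disjoint_W (h : IsSeparator G S W X) :
    ∀ z ∈ reachSet G X S, z ∉ W := by
  rintro z ⟨s, hs, hr⟩ hz
  exact h.2 s hs z hz hr

lemma mem_nbhd (hz : z ∉ A) (hu : u ∈ A) (hadj : G.Adj u z) : z ∈ nbhd G A :=
  ⟨hz, u, hu, hadj⟩

lemma nbhd_disj : ∀ z ∈ nbhd G A, z ∉ A := fun _ hz => hz.1

/-- The boundary of the reach set is inside the removed set. -/
lemma nbhd_reachSet_subset (hSX : ∀ t ∈ S, t ∉ X) :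
    nbhd G (reachSet G X S) ⊆ X := by
  rintro u ⟨hu, c, hc, hadj⟩
  by_contra huX
  exact hu (mem_reachSet_adj hc hadj (reachSet_inter_X hSX c hc) huX)

/-- Build a separator from a region `A`. -/
lemma sep_of_region (hS : S ⊆ A) (hAW : ∀ t ∈ W, t ∉ A)
    (hD : Disjoint (nbhd G A) (S ∪ W)) : IsSeparator G S W (nbhd G A) := by
  refine ⟨hD, fun s hs t ht hr => ?_⟩
  obtain ⟨y, z, hy, hz, hadj⟩ := exit_lemma hr (hS hs) (hAW t ht)
  exact hadj.2.2 (mem_nbhd hz hy hadj.1)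

lemma nbhd_union_subset : nbhd G (A ∪ B) ⊆ nbhd G A ∪ nbhd G B := by
  rintro u ⟨hu, c, hc, hadj⟩
  rcases hc with hc | hc
  · exact Or.inl ⟨fun h => hu (Or.inl h), c, hc, hadj⟩
  · exact Or.inr ⟨fun h => hu (Or.inr h), c, hc, hadj⟩

lemma nbhd_inter_subset : nbhd G (A ∩ B) ⊆ nbhd G A ∪ nbhd G B := by
  rintro u ⟨hu, c, hc, hadj⟩
  by_cases huA : u ∈ A
  · exact Or.inr ⟨fun h => hu ⟨huA, h⟩, c, hc.2, hadj⟩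
  · exact Or.inl ⟨huA, c, hc.1, hadj⟩

lemma nbhd_union_inter_subset :
    nbhd G (A ∪ B) ∩ nbhd G (A ∩ B) ⊆ nbhd G A ∩ nbhd G B := by
  rintro u ⟨⟨hu1, _⟩, ⟨_, c, hc, hadj⟩⟩
  exact ⟨⟨fun h => hu1 (Or.inl h), c, hc.1, hadj⟩, ⟨fun h => hu1 (Or.inr h), c, hc.2, hadj⟩⟩

/-- Submodularity of the vertex boundary. -/
lemma nbhd_submod (A B : Set V) :
    (nbhd G (A ∪ B)).ncard + (nbhd G (A ∩ B)).ncard ≤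
      (nbhd G A).ncard + (nbhd G B).ncard := by
  have h1 : nbhd G (A ∪ B) ∪ nbhd G (A ∩ B) ⊆ nbhd G A ∪ nbhd G B :=
    Set.union_subset nbhd_union_subset nbhd_inter_subset
  have h2 := nbhd_union_inter_subset (G := G) (A := A) (B := B)
  calc (nbhd G (A ∪ B)).ncard + (nbhd G (A ∩ B)).ncard
      = (nbhd G (A ∪ B) ∪ nbhd G (A ∩ B)).ncard + (nbhd G (A ∪ B) ∩ nbhd G (A ∩ B)).ncard := by
        rw [Set.ncard_union_add_ncard_inter]
    _ ≤ (nbhd G A ∪ nbhd G B).ncard + (nbhd G A ∩ nbhd G B).ncard := by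
        gcongr <;> first | exact Set.toFinite _ | assumption
    _ = (nbhd G A).ncard + (nbhd G B).ncard := by rw [Set.ncard_union_add_ncard_inter]

/-- Enlarging the source within the reach set preserves separators. -/
lemma sep_source_enlarge (h : IsSeparator G S W X) (hC : C ⊆ reachSet G X S) :
    IsSeparator G C W X := by
  constructor
  · rw [Set.disjoint_union_right]
    refine ⟨Set.disjoint_right.mpr fun c hc => reachSet_inter_X (sep_disjoint_S h) c (hC hc), ?_⟩
    exact Set.disjoint_right.mpr fun t ht => sep_disjoint_W h t ht
  · intro s hs t ht hr
    obtain ⟨s', hs', hr'⟩ := hC hs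
    exact h.2 s' hs' t ht (hr'.trans hr)

lemma sep_source_mono (h : IsSeparator G C W X) (hS : S ⊆ C) : IsSeparator G S W X := by
  refine ⟨h.1.mono_right (Set.union_subset_union_left _ hS), fun s hs => h.2 s (hS hs)⟩

/-- Every separator contains a minimal separator. -/
lemma exists_minimal_sep (h : IsSeparator G S W X) :
    ∃ X', X' ⊆ X ∧ IsMinimalSep G S W X' ∧ X'.ncard ≤ X.ncard := by
  obtain ⟨n, hn⟩ : ∃ n, X.ncard = n := ⟨_, rfl⟩
  induction n using Nat.strong_induction_on generalizing X with
  | _ n ih =>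
    by_cases hmin : ∀ X'' ⊂ X, ¬ IsSeparator G S W X''
    · exact ⟨X, subset_rfl, ⟨h, hmin⟩, le_rfl⟩
    · push_neg at hmin
      obtain ⟨X'', hsub, hsep⟩ := hmin
      have hlt : X''.ncard < n := hn ▸ Set.ncard_lt_ncard hsub (Set.toFinite _)
      obtain ⟨X', h1, h2, h3⟩ := ih X''.ncard hlt hsep rfl
      exact ⟨X', h1.trans hsub.subset, h2, h3.trans (le_of_lt (hn ▸ hlt))⟩

/-- A minimal separator is the boundary of its reach set. -/
lemma minimal_sep_eq_nbhd (h : IsMinimalSep G S W X) :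
    X = nbhd G (reachSet G X S) := by
  apply Set.Subset.antisymm _ (nbhd_reachSet_subset (sep_disjoint_S h.1))
  intro u huX
  by_contra hu
  have hss : X \ {u} ⊂ X := Set.sdiff_singleton_ssubset.mpr huX
  have hns := h.2 _ hss
  have hdisj : Disjoint (X \ {u}) (S ∪ W) := h.1.1.mono_left Set.diff_subset
  have hex : ∃ s ∈ S, ∃ t ∈ W, (removeVerts G (X \ {u})).Reachable s t := by
    by_contra hc
    push_neg at hc
    exact hns ⟨hdisj, fun s hs t ht => hc s hs t ht⟩
  obtain ⟨s, hs, t, ht, hr⟩ := hex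
  have htC : t ∉ reachSet G X S := fun h' => sep_reach_disjoint_W h.1 t h' ht
  obtain ⟨y, z, hy, hz, hadj⟩ :=
    exit_lemma (A := reachSet G X S) hr (mem_reachSet_self hs) htC
  have hzX : z ∈ X := by
    by_contra hzX
    exact hz (mem_reachSet_adj hy hadj.1 (reachSet_inter_X (sep_disjoint_S h.1) y hy) hzX)
  have hzu : z = u := by
    have := hadj.2.2
    simp only [Set.mem_diff, Set.mem_singleton_iff, not_and, not_not] at this
    exact this hzX
  exact hu (hzu ▸ mem_nbhd hz hy hadj.1)

end Infra2
section Core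
variable {G : SimpleGraph V} {W C Xh X : Set V} {v x : V}

/-- A minimum separator is a minimal separator. -/
lemma min_cut_minimal (hsep : IsSeparator G C W Xh)
    (hmin : ∀ X', IsSeparator G C W X' → Xh.ncard ≤ X'.ncard) :
    IsMinimalSep G C W Xh :=
  ⟨hsep, fun X' hss hsep' =>
    absurd (hmin X' hsep') (not_le.mpr (Set.ncard_lt_ncard hss (Set.toFinite _)))⟩

/-- Claim E: every minimum `C`–`W` cut has its reach set inside that of the farthest one. -/
lemma claimE (hsep : IsSeparator G C W Xh)
    (hmin : ∀ X', IsSeparator G C W X' → Xh.ncard ≤ X'.ncard)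
    (hmax : ∀ X', IsSeparator G C W X' → X'.ncard = Xh.ncard →
      (reachSet G X' C).ncard ≤ (reachSet G Xh C).ncard)
    {X' : Set V} (h' : IsSeparator G C W X') (hcard : X'.ncard = Xh.ncard) :
    reachSet G X' C ⊆ reachSet G Xh C := by
  set A := reachSet G X' C with hA
  set B := reachSet G Xh C with hB
  have hCA : C ⊆ A := subset_reachSet
  have hCB : C ⊆ B := subset_reachSet
  have hAW : ∀ t ∈ W, t ∉ A := fun t ht h => sep_reach_disjoint_W h' t h ht
  have hBW : ∀ t ∈ W, t ∉ B := fun t ht h => sep_reach_disjoint_W hsep t h ht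
  have hNA : nbhd G A ⊆ X' := nbhd_reachSet_subset (sep_disjoint_S h')
  have hNB : nbhd G B ⊆ Xh := nbhd_reachSet_subset (sep_disjoint_S hsep)
  have hdisj2 : Disjoint (X' ∪ Xh) (C ∪ W) := Set.disjoint_union_left.mpr ⟨h'.1, hsep.1⟩
  -- the boundary of the intersection is a separator
  have hSi : IsSeparator G C W (nbhd G (A ∩ B)) := by
    refine sep_of_region (Set.subset_inter hCA hCB)
      (fun t ht h => hAW t ht h.1)
      (Disjoint.mono_left (nbhd_inter_subset.trans (Set.union_subset_union hNA hNB)) hdisj2)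
  have hSu : IsSeparator G C W (nbhd G (A ∪ B)) := by
    refine sep_of_region (hCA.trans Set.subset_union_left)
      (fun t ht h => h.elim (hAW t ht) (hBW t ht))
      (Disjoint.mono_left (nbhd_union_subset.trans (Set.union_subset_union hNA hNB)) hdisj2)
  have hsm := nbhd_submod (G := G) A B
  have h1 : (nbhd G A).ncard ≤ X'.ncard := Set.ncard_le_ncard hNA (Set.toFinite _)
  have h2 : (nbhd G B).ncard ≤ Xh.ncard := Set.ncard_le_ncard hNB (Set.toFinite _)
  have h3 : Xh.ncard ≤ (nbhd G (A ∩ B)).ncard := hmin _ hSi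
  have h4 : Xh.ncard ≤ (nbhd G (A ∪ B)).ncard := hmin _ hSu
  have hUeq : (nbhd G (A ∪ B)).ncard = Xh.ncard := by omega
  -- the reach set of the union boundary contains A ∪ B
  have hreach : A ∪ B ⊆ reachSet G (nbhd G (A ∪ B)) C := by
    rintro z (hz | hz)
    · obtain ⟨s, hs, hr⟩ := hz
      refine ⟨s, hs, reach_transfer (sep_disjoint_S h' s hs) hr ?_⟩
      intro z' hz' hmem
      exact hmem.1 (Or.inl ((reachSet_mono_source (Set.singleton_subset_iff.mpr hs)) hz'))
    · obtain ⟨s, hs, hr⟩ := hz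
      refine ⟨s, hs, reach_transfer (sep_disjoint_S hsep s hs) hr ?_⟩
      intro z' hz' hmem
      exact hmem.1 (Or.inr ((reachSet_mono_source (Set.singleton_subset_iff.mpr hs)) hz'))
  have hle : (A ∪ B).ncard ≤ B.ncard :=
    (Set.ncard_le_ncard hreach (Set.toFinite _)).trans (hmax _ hSu hUeq)
  have : B = A ∪ B :=
    Set.eq_of_subset_of_ncard_le Set.subset_union_right hle (Set.toFinite _)
  intro z hz
  have hzz : z ∈ A ∪ B := Or.inl hz
  rw [← this] at hzz
  exact hzz

/-- Claim D: pushing one vertex of the farthest minimum cut into the source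
raises the minimum cut size. -/
lemma claimD (hsep : IsSeparator G C W Xh)
    (hmin : ∀ X', IsSeparator G C W X' → Xh.ncard ≤ X'.ncard)
    (hmax : ∀ X', IsSeparator G C W X' → X'.ncard = Xh.ncard →
      (reachSet G X' C).ncard ≤ (reachSet G Xh C).ncard)
    (hx : x ∈ Xh) (hXsep : IsSeparator G (reachSet G Xh C ∪ {x}) W X) :
    Xh.ncard + 1 ≤ X.ncard := by
  by_contra hle
  push_neg at hle
  have hXle : X.ncard ≤ Xh.ncard := by omega
  set Ch := reachSet G Xh C with hCh
  set C1 : Set V := {u | u ∉ X ∧ ∀ w ∈ W, ¬ (removeVerts G X).Reachable u w} with hC1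
  have hsrc : Ch ∪ {x} ⊆ C1 := by
    intro s hs
    exact ⟨sep_disjoint_S hXsep s hs, fun t ht hr => hXsep.2 s hs t ht hr⟩
  have hC1W : ∀ t ∈ W, t ∉ C1 := fun t ht h => h.2 t ht (SimpleGraph.Reachable.refl _)
  have hNC1 : nbhd G C1 ⊆ X := by
    rintro u ⟨hu, c, hc, hadj⟩
    by_contra huX
    rw [hC1, Set.mem_setOf_eq] at hu
    push_neg at hu
    obtain ⟨w, hw, hr⟩ := hu huX
    exact hc.2 w hw ((SimpleGraph.Adj.reachable
      (removeVerts_adj_mk hadj hc.1 huX)).trans hr)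
  have hCC1 : C ⊆ C1 := (subset_reachSet.trans Set.subset_union_left).trans hsrc
  have hXdisj : Disjoint X (C ∪ W) :=
    hXsep.1.mono_right (Set.union_subset_union_left _
      (subset_reachSet.trans Set.subset_union_left))
  have hN1sep : IsSeparator G C W (nbhd G C1) :=
    sep_of_region hCC1 hC1W (hXdisj.mono_left hNC1)
  have hN1le : (nbhd G C1).ncard ≤ Xh.ncard :=
    (Set.ncard_le_ncard hNC1 (Set.toFinite _)).trans hXle
  have hN1eq : (nbhd G C1).ncard = Xh.ncard :=
    le_antisymm hN1le (hmin _ hN1sep)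
  -- reach set of nbhd C1 equals Ch
  have hup : Ch ⊆ reachSet G (nbhd G C1) C := by
    rintro z ⟨s, hs, hr⟩
    refine ⟨s, hs, reach_transfer (sep_disjoint_S hsep s hs) hr ?_⟩
    intro z' hz' hmem
    have : z' ∈ C1 := hsrc (Or.inl (reachSet_mono_source (Set.singleton_subset_iff.mpr hs) hz'))
    exact hmem.1 this
  have hdown : reachSet G (nbhd G C1) C ⊆ Ch := claimE hsep hmin hmax hN1sep hN1eq
  have heq : reachSet G (nbhd G C1) C = Ch := Set.Subset.antisymm hdown hup
  have hN1min : IsMinimalSep G C W (nbhd G C1) := by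
    refine ⟨hN1sep, fun X'' hss hsep'' => ?_⟩
    have := hmin X'' hsep''
    have := Set.ncard_lt_ncard hss (Set.toFinite _)
    omega
  have hXhmin : IsMinimalSep G C W Xh := min_cut_minimal hsep hmin
  have : nbhd G C1 = Xh := by
    rw [minimal_sep_eq_nbhd hN1min, heq, ← minimal_sep_eq_nbhd hXhmin]
  have hxC1 : x ∈ C1 := hsrc (Or.inr rfl)
  have hxN : x ∈ nbhd G C1 := by rw [this]; exact hx
  exact hxN.1 hxC1
end Core
section Core2
variable {G : SimpleGraph V} {W C Xh X : Set V} {v x : V}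

/-- Claim F: every compatible important `{v}`–`W` separator reaches beyond the
farthest minimum `C`–`W` cut. -/
lemma claimF (hsep : IsSeparator G C W Xh)
    (hmin : ∀ X', IsSeparator G C W X' → Xh.ncard ≤ X'.ncard)
    (hmax : ∀ X', IsSeparator G C W X' → X'.ncard = Xh.ncard →
      (reachSet G X' C).ncard ≤ (reachSet G Xh C).ncard)
    (hvC : v ∈ C)
    (himp : IsImportantSep G {v} W X) (hCX : C ⊆ reachSet G X {v}) :
    reachSet G Xh C ⊆ reachSet G X {v} ∧ Xh ⊆ reachSet G X {v} ∪ X := by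
  set A := reachSet G Xh C with hA
  set B := reachSet G X {v} with hB
  have hXsepC : IsSeparator G C W X := sep_source_enlarge himp.1.1 hCX
  have hCA : C ⊆ A := subset_reachSet
  have hAW : ∀ t ∈ W, t ∉ A := fun t ht h => sep_reach_disjoint_W hsep t h ht
  have hBW : ∀ t ∈ W, t ∉ B := fun t ht h => sep_reach_disjoint_W himp.1.1 t h ht
  have hNA : nbhd G A ⊆ Xh := nbhd_reachSet_subset (sep_disjoint_S hsep)
  have hNB : nbhd G B ⊆ X := nbhd_reachSet_subset (sep_disjoint_S himp.1.1)
  have hdisj2 : Disjoint (Xh ∪ X) (C ∪ W) := Set.disjoint_union_left.mpr ⟨hsep.1, hXsepC.1⟩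
  have hSi : IsSeparator G C W (nbhd G (A ∩ B)) :=
    sep_of_region (Set.subset_inter hCA hCX) (fun t ht h => hAW t ht h.1)
      (Disjoint.mono_left (nbhd_inter_subset.trans (Set.union_subset_union hNA hNB)) hdisj2)
  have hvAB : ({v} : Set V) ⊆ A ∪ B := by
    intro t ht; rw [Set.mem_singleton_iff] at ht; subst ht
    exact Or.inl (hCA hvC)
  have hSu : IsSeparator G {v} W (nbhd G (A ∪ B)) := by
    refine sep_of_region hvAB (fun t ht h => h.elim (hAW t ht) (hBW t ht)) ?_
    refine Disjoint.mono_left (nbhd_union_subset.trans (Set.union_subset_union hNA hNB)) ?_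
    rw [Set.disjoint_union_left]
    constructor
    · exact hsep.1.mono_right (Set.union_subset_union_left _ (Set.singleton_subset_iff.mpr hvC))
    · exact himp.1.1.1
  have hsm := nbhd_submod (G := G) A B
  have h1 : (nbhd G A).ncard ≤ Xh.ncard := Set.ncard_le_ncard hNA (Set.toFinite _)
  have h2 : (nbhd G B).ncard ≤ X.ncard := Set.ncard_le_ncard hNB (Set.toFinite _)
  have h3 : Xh.ncard ≤ (nbhd G (A ∩ B)).ncard := hmin _ hSi
  have hUle : (nbhd G (A ∪ B)).ncard ≤ X.ncard := by omega
  obtain ⟨X5, hX5sub, hX5min, hX5card⟩ := exists_minimal_sep hSu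
  have hX5le : X5.ncard ≤ X.ncard := hX5card.trans hUle
  -- reach set of X5 contains A ∪ B
  have hX5AB : ∀ z ∈ A ∪ B, z ∉ X5 :=
    fun z hz h5 => (hX5sub h5).1 hz
  have hreachB : B ⊆ reachSet G X5 {v} := by
    rintro z ⟨s, hs, hr⟩
    refine ⟨s, hs, reach_transfer (sep_disjoint_S himp.1.1 s hs) hr ?_⟩
    intro z' hz' h5
    exact hX5AB z' (Or.inr (reachSet_mono_source (Set.singleton_subset_iff.mpr hs) hz')) h5
  have hreachA : A ⊆ reachSet G X5 {v} := by
    rintro z ⟨s, hs, hr⟩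
    have hs5 : s ∈ reachSet G X5 {v} := hreachB (hCX hs)
    refine mem_reachSet_trans hs5 (reach_transfer (sep_disjoint_S hsep s hs) hr ?_)
    intro z' hz' h5
    exact hX5AB z' (Or.inl (reachSet_mono_source (Set.singleton_subset_iff.mpr hs) hz')) h5
  have hAB : A ⊆ B := by
    by_contra hAB
    have hstrict : B ⊂ reachSet G X5 {v} := by
      refine ⟨hreachB, fun hcon => ?_⟩
      obtain ⟨z, hzA, hzB⟩ := Set.not_subset.mp hAB
      exact hzB (hcon (hreachA hzA))
    have := himp.2 X5 hX5min hstrict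
    omega
  refine ⟨hAB, ?_⟩
  -- Xh ⊆ B ∪ X
  have hXhmin : IsMinimalSep G C W Xh := min_cut_minimal hsep hmin
  have hXheq : Xh = nbhd G A := minimal_sep_eq_nbhd hXhmin
  intro u hu
  rw [hXheq] at hu
  obtain ⟨huA, c, hc, hadj⟩ := hu
  by_cases huX : u ∈ X
  · exact Or.inr huX
  · refine Or.inl (mem_reachSet_adj (hAB hc) hadj ?_ huX)
    exact reachSet_inter_X (sep_disjoint_S himp.1.1) c (hAB hc)

/-- The farthest minimum `C`–`W` cut is an important `{v}`–`W` separator,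
provided `C` is a connected region containing `v`. -/
lemma claimI (hsep : IsSeparator G C W Xh)
    (hmin : ∀ X', IsSeparator G C W X' → Xh.ncard ≤ X'.ncard)
    (hmax : ∀ X', IsSeparator G C W X' → X'.ncard = Xh.ncard →
      (reachSet G X' C).ncard ≤ (reachSet G Xh C).ncard)
    (hvC : v ∈ C)
    (hconn : ∀ X' : Set V, Disjoint X' C → C ⊆ reachSet G X' {v}) :
    IsImportantSep G {v} W Xh := by
  have hXhC : Disjoint Xh C := hsep.1.mono_right Set.subset_union_left
  have hreach_eq : reachSet G Xh {v} = reachSet G Xh C := by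
    apply Set.Subset.antisymm (reachSet_mono_source (Set.singleton_subset_iff.mpr hvC))
    rintro z ⟨s, hs, hr⟩
    exact mem_reachSet_trans (hconn Xh hXhC hs) hr
  have hvsep : IsSeparator G {v} W Xh := by
    refine ⟨hsep.1.mono_right (Set.union_subset_union_left _
      (Set.singleton_subset_iff.mpr hvC)), ?_⟩
    intro s hs t ht hr
    have hsv : s = v := Set.eq_of_mem_singleton hs
    exact hsep.2 s (hsv.symm ▸ hvC) t ht hr
  have hminimal : IsMinimalSep G {v} W Xh := by
    refine ⟨hvsep, fun X' hss hsep' => ?_⟩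
    have hX'C : Disjoint X' C := hXhC.mono_left hss.subset
    have hCsep' : IsSeparator G C W X' := by
      refine ⟨Set.disjoint_union_right.mpr ⟨hX'C, hsep'.1.mono_right
        Set.subset_union_right⟩, ?_⟩
      intro s hs t ht hr
      have hsv : s ∈ reachSet G X' {v} := hconn X' hX'C hs
      obtain ⟨vv, hvv, hrv⟩ := hsv
      exact hsep'.2 vv hvv t ht (hrv.trans hr)
    have := hmin X' hCsep'
    have := Set.ncard_lt_ncard hss (Set.toFinite _)
    omega
  refine ⟨hminimal, fun X'' hmin'' hss => ?_⟩
  by_contra hcon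
  push_neg at hcon
  have hCX'' : C ⊆ reachSet G X'' {v} := by
    intro s hs
    exact hss.1 (hreach_eq ▸ (subset_reachSet hs : s ∈ reachSet G Xh C))
  have hCsep'' : IsSeparator G C W X'' := sep_source_enlarge hmin''.1 hCX''
  have hcard'' : X''.ncard = Xh.ncard := le_antisymm hcon (hmin _ hCsep'')
  have hE := claimE hsep hmin hmax hCsep'' hcard''
  have : reachSet G X'' {v} ⊆ reachSet G Xh {v} := by
    rw [hreach_eq]
    exact (reachSet_mono_source (Set.singleton_subset_iff.mpr hvC)).trans hE
  exact hss.2 this |>.elim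
end Core2
section Rec
variable {G : SimpleGraph V} {W Y : Set V} {k : ℕ} {v : V}

/-- The greedy hitting-set construction for a single vertex `v ∈ Y`. -/
lemma hitting_rec (G : SimpleGraph V) (W Y : Set V) (k : ℕ) (v : V)
    (cond3 : ∀ X, IsImportantSep G {v} W X → X.ncard ≤ k → ¬ X ⊆ Y) :
    ∀ d : ℕ, ∀ C : Set V,
      v ∈ C → (∀ t ∈ W, t ∉ C) →
      (∀ X' : Set V, Disjoint X' C → C ⊆ reachSet G X' {v}) →
      (∀ X, IsSeparator G C W X → k + 1 ≤ X.ncard + d) →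
      ∃ B : Set V, B.ncard ≤ d ∧ (∀ b ∈ B, b ∉ Y) ∧
        ∀ X, IsImportantSep G {v} W X → X.ncard ≤ k → C ⊆ reachSet G X {v} →
          ∃ b ∈ B, b ∈ X := by
  intro d
  induction d with
  | zero =>
      intro C hvC hCW hconn h4
      refine ⟨∅, by simp, by simp, fun X himp hXk hCX => ?_⟩
      have hCsep : IsSeparator G C W X := sep_source_enlarge himp.1.1 hCX
      have := h4 X hCsep
      omega
  | succ d ih =>
      intro C hvC hCW hconn h4
      by_cases hex : ∃ X0, IsSeparator G C W X0 ∧ X0.ncard ≤ k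
      · obtain ⟨X0, hX0sep, hX0k⟩ := hex
        -- choose a minimum cut of maximum reach
        set SS : Set (Set V) := {X | IsSeparator G C W X} with hSS
        obtain ⟨Xm, hXmSS, hXmmin⟩ :=
          Set.exists_min_image SS Set.ncard (Set.toFinite _) ⟨X0, hX0sep⟩
        set M : Set (Set V) := {X | IsSeparator G C W X ∧ X.ncard = Xm.ncard} with hM
        obtain ⟨Xh, hXhM, hXhmax⟩ :=
          Set.exists_max_image M (fun X => (reachSet G X C).ncard) (Set.toFinite _)
            ⟨Xm, hXmSS, rfl⟩
        have hsep : IsSeparator G C W Xh := hXhM.1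
        have hcard : Xh.ncard = Xm.ncard := hXhM.2
        have hmin : ∀ X', IsSeparator G C W X' → Xh.ncard ≤ X'.ncard :=
          fun X' h' => hcard ▸ hXmmin X' h'
        have hmax : ∀ X', IsSeparator G C W X' → X'.ncard = Xh.ncard →
            (reachSet G X' C).ncard ≤ (reachSet G Xh C).ncard :=
          fun X' h' hc => hXhmax X' ⟨h', hc.trans hcard⟩
        have hXhk : Xh.ncard ≤ k := (hmin X0 hX0sep).trans hX0k
        have himpXh : IsImportantSep G {v} W Xh := claimI hsep hmin hmax hvC hconn
        obtain ⟨x, hxXh, hxY⟩ := Set.not_subset.mp (cond3 Xh himpXh hXhk)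
        set Ch := reachSet G Xh C with hCh
        set C' := Ch ∪ {x} with hC'
        have hCCh : C ⊆ Ch := subset_reachSet
        have hCC' : C ⊆ C' := hCCh.trans Set.subset_union_left
        have h1' : v ∈ C' := hCC' hvC
        have h2' : ∀ t ∈ W, t ∉ C' := by
          rintro t ht (h | h)
          · exact sep_reach_disjoint_W hsep t h ht
          · rw [Set.mem_singleton_iff] at h
            exact sep_disjoint_W hsep t ht (h ▸ hxXh)
        have hChsub : ∀ {X' : Set V}, Disjoint X' C' → ∀ z ∈ Ch, z ∈ reachSet G X' {v} := by
          intro X' hdisj z hz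
          have hdisjC : Disjoint X' C := hdisj.mono_right hCC'
          obtain ⟨s, hs, hr⟩ := hz
          refine mem_reachSet_trans (hconn X' hdisjC hs)
            (reach_transfer (sep_disjoint_S hsep s hs) hr ?_)
          intro z' hz'
          have : z' ∈ Ch := reachSet_mono_source (Set.singleton_subset_iff.mpr hs) hz'
          exact Set.disjoint_right.mp hdisj (Or.inl this)
        have h3' : ∀ X' : Set V, Disjoint X' C' → C' ⊆ reachSet G X' {v} := by
          intro X' hdisj z hz
          rcases hz with hz | hz
          · exact hChsub hdisj z hz
          · have hzx : z = x := Set.eq_of_mem_singleton hz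
            have hXheq : Xh = nbhd G Ch := minimal_sep_eq_nbhd (min_cut_minimal hsep hmin)
            have hxN : x ∈ nbhd G Ch := hXheq ▸ hxXh
            obtain ⟨hxCh, c, hc, hadj⟩ := hxN
            have hgoal : x ∈ reachSet G X' {v} := by
              refine mem_reachSet_adj (hChsub hdisj c hc) hadj ?_ ?_
              · exact Set.disjoint_right.mp hdisj (Or.inl hc)
              · exact Set.disjoint_right.mp hdisj (Or.inr rfl)
            exact hzx.symm ▸ hgoal
        have h4' : ∀ X, IsSeparator G C' W X → k + 1 ≤ X.ncard + d := by
          intro X hXsep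
          have hD := claimD hsep hmin hmax hxXh hXsep
          have := h4 Xh hsep
          omega
        obtain ⟨B', hB'd, hB'Y, hB'hit⟩ := ih C' h1' h2' h3' h4'
        refine ⟨insert x B', ?_, ?_, ?_⟩
        · exact (Set.ncard_insert_le _ _).trans (by omega)
        · rintro b hb
          rcases Set.mem_insert_iff.mp hb with rfl | hb
          · exact hxY
          · exact hB'Y b hb
        · intro X himp hXk hCX
          by_cases hxX : x ∈ X
          · exact ⟨x, Set.mem_insert _ _, hxX⟩
          · obtain ⟨hF1, hF2⟩ := claimF hsep hmin hmax hvC himp hCX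
            have hC'X : C' ⊆ reachSet G X {v} := by
              rintro z (hz | hz)
              · exact hF1 hz
              · exact (Set.eq_of_mem_singleton hz).symm ▸ ((hF2 hxXh).resolve_right hxX)
            obtain ⟨b, hb, hbX⟩ := hB'hit X himp hXk hC'X
            exact ⟨b, Set.mem_insert_of_mem _ hb, hbX⟩
      · push_neg at hex
        refine ⟨∅, by simp, by simp, fun X himp hXk hCX => ?_⟩
        have hCsep : IsSeparator G C W X := sep_source_enlarge himp.1.1 hCX
        have := hex X hCsep
        omega
end Rec
section Final
variable {G : SimpleGraph V} {W Y : Set V} {k : ℕ}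

lemma ncard_biUnion_le' (s : Set V) (g : V → Set V) (k : ℕ) :
    (∀ v ∈ s, (g v).ncard ≤ k) → (⋃ v ∈ s, g v).ncard ≤ s.ncard * k := by
  refine Set.Finite.induction_on s (Set.toFinite s) (by simp) ?_
  intro a t ha ht ih hg
  rw [Set.biUnion_insert]
  calc (g a ∪ ⋃ v ∈ t, g v).ncard ≤ (g a).ncard + (⋃ v ∈ t, g v).ncard :=
        Set.ncard_union_le _ _
    _ ≤ k + t.ncard * k := by
        have h1 := hg a (Set.mem_insert _ _)
        have h2 := ih (fun v hv => hg v (Set.mem_insert_of_mem _ hv))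
        omega
    _ = (t.ncard + 1) * k := by ring
    _ = (insert a t).ncard * k := by rw [Set.ncard_insert_of_notMem ha (Set.toFinite _)]

/-- The empty set is an important separator whenever it separates. -/
lemma empty_important (v : V) (hsep : IsSeparator G {v} W ∅) :
    IsImportantSep G {v} W ∅ := by
  refine ⟨⟨hsep, fun X' hss _ => hss.2 (Set.empty_subset _)⟩, ?_⟩
  intro X'' hmin'' hss
  exfalso
  apply hss.2
  intro z hz
  obtain ⟨s, hs, hr⟩ := hz
  exact ⟨s, hs, hr.mono (removeVerts_mono (Set.empty_subset _))⟩
end Final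
/-- For every `k`-shadow-removable set `Y` (disjoint from `W`) there exist
disjoint sets `R, B` with `|R| ≤ k` and `|B| ≤ k²` such that every coloring that makes `R`
red and `B` blue yields `Y ∩ Z_c = ∅` and `R_{G,W}(Y) ⊆ Z_c`. -/
theorem shadow_coloring
    (G : SimpleGraph V) (W : Set V) (k : ℕ) (hk : 0 < k)
    (Y : Set V) (hYW : Disjoint Y W) (hY : KShadowRemovable G W k Y) :
    ∃ R B : Set V, Disjoint R B ∧ R.ncard ≤ k ∧ B.ncard ≤ k ^ 2 ∧
      ∀ c : V → Bool, (∀ v ∈ R, c v = true) → (∀ v ∈ B, c v = false) →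
        Y ∩ Zset G W k c = ∅ ∧ shadow G W Y ⊆ Zset G W k c := by

  obtain ⟨hY1, hY2, hY3⟩ := hY
  have hBv : ∀ v : V, ∃ Bv : Set V, Bv.ncard ≤ k ∧ (∀ b ∈ Bv, b ∉ Y) ∧
      (v ∈ Y → ∀ X, IsImportantSep G {v} W X → X.ncard ≤ k → ∃ b ∈ Bv, b ∈ X) := by
    intro v
    by_cases hvY : v ∈ Y
    · have cond3 : ∀ X, IsImportantSep G {v} W X → X.ncard ≤ k → ¬ X ⊆ Y :=
        fun X himp hXk => hY3 v hvY X himp hXk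
      have h4 : ∀ X, IsSeparator G {v} W X → k + 1 ≤ X.ncard + k := by
        intro X hXsep
        rcases Nat.eq_zero_or_pos X.ncard with h0 | h1
        · exfalso
          have hXe : X = ∅ := (Set.ncard_eq_zero (Set.toFinite _)).mp h0
          have himp := empty_important v (hXe ▸ hXsep)
          exact hY3 v hvY ∅ himp (by simp) (Set.empty_subset _)
        · omega
      obtain ⟨Bv, h1, h2, h3⟩ := hitting_rec G W Y k v cond3 k {v} rfl
        (fun t ht h => (Set.disjoint_left.mp hYW hvY) (h ▸ ht))
        (fun X' _ => Set.singleton_subset_iff.mpr (mem_reachSet_self rfl))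
        h4
      exact ⟨Bv, h1, h2, fun _ X himp hXk =>
        h3 X himp hXk (Set.singleton_subset_iff.mpr (mem_reachSet_self rfl))⟩
    · exact ⟨∅, by simp, by simp, fun h => absurd h hvY⟩
  choose f hf1 hf2 hf3 using hBv
  refine ⟨Y, ⋃ v ∈ Y, f v, ?_, hY1, ?_, ?_⟩
  · refine Set.disjoint_left.mpr fun a haY haB => ?_
    simp only [Set.mem_iUnion] at haB
    obtain ⟨v, hv, hav⟩ := haB
    exact hf2 v a hav haY
  · calc (⋃ v ∈ Y, f v).ncard ≤ Y.ncard * k := ncard_biUnion_le' Y f k (fun v _ => hf1 v)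
      _ ≤ k * k := Nat.mul_le_mul_right k hY1
      _ = k ^ 2 := by ring
  · intro c hred hblue
    constructor
    · rw [Set.eq_empty_iff_forall_notMem]
      rintro v ⟨hvY, hvZ⟩
      obtain ⟨hvW, X, himp, hXk, hXred⟩ := hvZ
      obtain ⟨b, hbBv, hbX⟩ := hf3 v hvY X himp hXk
      have hbB : b ∈ ⋃ v ∈ Y, f v := Set.mem_biUnion hvY hbBv
      have hb1 := hblue b hbB
      have hb2 := hXred b hbX
      simp [hb1] at hb2
    · intro v hv
      obtain ⟨X, himp, hXk, hXY⟩ := hY2 v hv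
      exact ⟨hv.1, X, himp, hXk, fun u hu => hred u (hXY hu)⟩
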